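/- Let R be a binary tree and let M be a model of the L-theory T_R. Then the sequence x : ℕ → Bool defined by x(n) = true if and only if M ⊨ A(Sⁿ(0)) is a path through R, i.e., every finite initial segment of x belongs to R. -/

import Mathlib

open FirstOrder FirstOrder.Language

/-- The function symbols of the language `L`: a constant `0` and unary functions `S`, `P`. -/
inductive LFunc : ℕ → Type
  | zero : LFunc 0
  | succ : LFunc 1
  | pred : LFunc 1

/-- The relation symbols of the language `L`: a unary relation `A`. -/
inductive LRel : ℕ → Type
  | A : LRel 1

/-- The first-order language with a constant symbol `0`, unary function symbols `S` and `P`,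
and a unary relation symbol `A`. -/
def L : Language := ⟨LFunc, LRel⟩

/-- The reduct `L₀` of `L` without the relation symbol `A`. -/
def L₀ : Language := ⟨LFunc, fun _ => Empty⟩

/-- The inclusion of `L₀` into `L`. -/
def incl : L₀ →ᴸ L where
  onFunction := fun {_} f => f
  onRelation := fun {_} r => Empty.elim r

/-- `ℤ` as an `L₀`-structure, interpreting `0` as zero, `S` as successor, `P` as predecessor. -/
instance intL0Structure : L₀.Structure ℤ where
  funMap := fun f v => match f with
    | .zero => 0
    | .succ => v 0 + 1
    | .pred => v 0 - 1
  RelMap := fun r _ => Empty.elim r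

/-- The `L`-term `0`. -/
def zeroT {α : Type*} : L.Term α := Term.func LFunc.zero ![]

/-- The `L`-term `S t`. -/
def succT {α : Type*} (t : L.Term α) : L.Term α := Term.func LFunc.succ ![t]

/-- The `L`-term `P t`. -/
def predT {α : Type*} (t : L.Term α) : L.Term α := Term.func LFunc.pred ![t]

/-- The `L`-term `Sᵏ t`. -/
def iterST {α : Type*} (k : ℕ) (t : L.Term α) : L.Term α := succT^[k] t

/-- The `L`-term `Pᵏ t`. -/
def iterPT {α : Type*} (k : ℕ) (t : L.Term α) : L.Term α := predT^[k] t

/-- The atomic `L`-formula `A t`. -/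
def Aform {α : Type*} (t : L.Term α) : L.Formula α := Relations.formula LRel.A ![t]

/-- The sentence asserting that the truth values of `A(0), A(S0), …, A(Sⁿ⁻¹0)` follow the
pattern `σ`. -/
noncomputable def patternSentence (n : ℕ) (σ : Fin n → Bool) : L.Sentence :=
  ((Finset.univ.toList.map fun i : Fin n =>
    if σ i then Aform (iterST i zeroT) else (Aform (iterST i zeroT)).not).foldr (· ⊓ ·) ⊤)

/-- The `n`-th tree axiom for `R`: the disjunction, over all length-`n` strings `σ ∈ R`, of
the sentence asserting that `A(0), …, A(Sⁿ⁻¹0)` follow the pattern `σ`. -/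
noncomputable def treeAxiom (R : Set (List Bool)) (n : ℕ) : L.Sentence :=
  letI := Classical.decPred fun σ : Fin n → Bool => List.ofFn σ ∈ R
  (((Finset.univ.filter fun σ : Fin n → Bool => List.ofFn σ ∈ R).toList.map
    (patternSentence n)).foldr (· ⊔ ·) ⊥)

/-- The theory `T_R`: all `L₀`-sentences true in `(ℤ, 0, succ, pred)`, together with the
tree axioms for `R`. -/
noncomputable def TR (R : Set (List Bool)) : L.Theory :=
  incl.onTheory (L₀.completeTheory ℤ) ∪ Set.range (treeAxiom R)

/-- `R ⊆ List Bool` is a binary tree if it is closed under initial segments. -/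
def IsBinaryTree (R : Set (List Bool)) : Prop :=
  ∀ σ ∈ R, ∀ τ : List Bool, τ <+: σ → τ ∈ R

/-- The length-`n` initial segment of an infinite binary sequence `x : ℕ → Bool`. -/
def initSeg (x : ℕ → Bool) (n : ℕ) : List Bool :=
  List.ofFn fun i : Fin n => x i

theorem realize_patternSentence {M : Type*} [L.Structure M] {n : ℕ} (σ : Fin n → Bool) :
    M ⊨ patternSentence n σ ↔
      ∀ i : Fin n, (σ i = true ↔ M ⊨ (Aform (iterST i zeroT) : L.Sentence)) := by
  simp only [patternSentence, Sentence.Realize, Formula.Realize, BoundedFormula.realize_foldr_inf,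
    List.mem_map, Finset.mem_toList, Finset.mem_univ, true_and, forall_exists_index,
    forall_apply_eq_imp_iff]
  refine forall_congr' fun i => ?_
  cases σ i <;> simp

theorem realize_treeAxiom {M : Type*} [L.Structure M] (R : Set (List Bool)) (n : ℕ) :
    M ⊨ treeAxiom R n ↔ ∃ σ : Fin n → Bool, List.ofFn σ ∈ R ∧ M ⊨ patternSentence n σ := by
  simp [treeAxiom, Sentence.Realize, Formula.Realize, BoundedFormula.realize_foldr_sup]

theorem path_of_model_TR_general (R : Set (List Bool))
    (M : Type*) [L.Structure M] (hM : M ⊨ TR R) (x : ℕ → Bool)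
    (hx : ∀ n : ℕ, x n = true ↔ M ⊨ (Aform (iterST n zeroT) : L.Sentence)) :
    ∀ n : ℕ, initSeg x n ∈ R := by
  intro n
  obtain ⟨σ, hσR, hσ⟩ :=
    (realize_treeAxiom R n).1 (hM.realize_of_mem _ (Or.inr ⟨n, rfl⟩))
  have hσx : σ = fun i : Fin n => x i := by
    funext i
    exact Bool.eq_iff_iff.2 (((realize_patternSentence σ).1 hσ i).trans (hx i).symm)
  rwa [initSeg, ← hσx]

/-- If `M` is a model of `T_R`, then the sequence `x : ℕ → Bool` defined by
`x n = true ↔ M ⊨ A(Sⁿ(0))` is a path through `R`. -/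
theorem path_of_model_TR (R : Set (List Bool)) (hTree : IsBinaryTree R)
    (M : Type*) [L.Structure M] (hM : M ⊨ TR R) (x : ℕ → Bool)
    (hx : ∀ n : ℕ, x n = true ↔ M ⊨ (Aform (iterST n zeroT) : L.Sentence)) :
    ∀ n : ℕ, initSeg x n ∈ R :=
  path_of_model_TR_general R M hM x hx
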